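/- arXiv:1912.00210 — 9 statements merged into one kernel-verified Lean document; each statement's English description precedes it below -/
import Mathlib

section
/- Let φ : [0,1] → ℝ be smooth and positive, and suppose the function F(v) = |v|·φ(|v₂|/|v|) (for v = v₁+v₂ in an orthogonal decomposition V = V₁ ⊕ V₂ of a real inner product space) is a Minkowski norm (i.e. strongly convex). Then for every s ∈ (0,1), φ(s) − s·φ'(s) > 0. -/
open RealInnerProductSpace

/-- If `F v = ‖v‖ * φ(‖v₂‖/‖v‖)` is a Minkowski norm on `V = V₁ ⊕ V₁ᗮ`,
then `φ s - s φ'(s) > 0` for all `s ∈ (0,1)`. -/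
theorem stmt0
    (V : Type*) [NormedAddCommGroup V] [InnerProductSpace ℝ V] [FiniteDimensional ℝ V]
    (V₁ : Submodule ℝ V) (hV₁ : V₁ ≠ ⊥) (hV₂ : V₁ᗮ ≠ ⊥)
    (φ : ℝ → ℝ) (hφsmooth : ContDiff ℝ (⊤ : ℕ∞) φ) (hφpos : ∀ s ∈ Set.Icc (0:ℝ) 1, 0 < φ s)
    (F : V → ℝ)
    (hF : ∀ v : V, F v = ‖v‖ * φ (‖(V₁ᗮ.orthogonalProjectionOnto v : V)‖ / ‖v‖))
    -- F is a Minkowski norm: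
    (hFcont : Continuous F)
    (hFpos : ∀ v : V, v ≠ 0 → 0 < F v)
    (hFsmooth : ContDiffOn ℝ (⊤ : ℕ∞) F {(0:V)}ᶜ)
    (hFhomog : ∀ (c : ℝ) (v : V), 0 < c → F (c • v) = c * F v)
    (hFconvex : ∀ y : V, y ≠ 0 → ∀ w : V, w ≠ 0 →
      0 < deriv (deriv (fun t : ℝ => F (y + t • w) ^ 2 / 2)) 0) :
    ∀ s ∈ Set.Ioo (0:ℝ) 1, 0 < φ s - s * deriv φ s := by
  intro s hs
  obtain ⟨hs0, hs1⟩ := hs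
  -- unit vectors e₁ ∈ V₁, e₂ ∈ V₁ᗮ
  obtain ⟨x₁, hx₁mem, hx₁⟩ := (Submodule.ne_bot_iff V₁).mp hV₁
  obtain ⟨x₂, hx₂mem, hx₂⟩ := (Submodule.ne_bot_iff V₁ᗮ).mp hV₂
  set e₁ : V := ‖x₁‖⁻¹ • x₁ with he₁def
  set e₂ : V := ‖x₂‖⁻¹ • x₂ with he₂def
  have he₁mem : e₁ ∈ V₁ := V₁.smul_mem _ hx₁mem
  have he₂mem : e₂ ∈ V₁ᗮ := V₁ᗮ.smul_mem _ hx₂mem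
  have he₁ : ‖e₁‖ = 1 := norm_smul_inv_norm hx₁
  have he₂ : ‖e₂‖ = 1 := norm_smul_inv_norm hx₂
  have he₁0 : e₁ ≠ 0 := by intro h; rw [h, norm_zero] at he₁; norm_num at he₁
  have he₂0 : e₂ ≠ 0 := by intro h; rw [h, norm_zero] at he₂; norm_num at he₂
  have hinner : ⟪e₁, e₂⟫ = 0 := he₂mem e₁ he₁mem
  clear_value e₁ e₂
  -- norm of combinations
  have hnorm : ∀ α β : ℝ, ‖α • e₁ + β • e₂‖ = Real.sqrt (α^2 + β^2) := by
    intro α β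
    have h2 : ‖α • e₁ + β • e₂‖^2 = α^2 + β^2 := by
      have hn1 : ‖α • e₁‖ = |α| := by rw [norm_smul, he₁, mul_one, Real.norm_eq_abs]
      have hn2 : ‖β • e₂‖ = |β| := by rw [norm_smul, he₂, mul_one, Real.norm_eq_abs]
      rw [norm_add_sq_real, hn1, hn2, real_inner_smul_left, real_inner_smul_right, hinner,
        sq_abs, sq_abs]
      ring
    rw [← h2, Real.sqrt_sq (norm_nonneg _)]
  -- projection of combinations
  have hproj : ∀ α β : ℝ, ((V₁ᗮ.orthogonalProjectionOnto (α • e₁ + β • e₂) : V₁ᗮ) : V) = β • e₂ := by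
    intro α β
    rw [map_add, map_smul, map_smul,
      Submodule.orthogonalProjectionOnto_orthogonal_apply_eq_zero he₁mem]
    have : (V₁ᗮ.orthogonalProjectionOnto e₂ : V) = e₂ := by
      exact (Submodule.starProjection_eq_self_iff (K := V₁ᗮ)).mpr he₂mem
    push_cast
    rw [this]
    simp
  -- F on combinations
  have hFval : ∀ α β : ℝ, 0 ≤ β → F (α • e₁ + β • e₂)
      = Real.sqrt (α^2 + β^2) * φ (β / Real.sqrt (α^2 + β^2)) := by
    intro α β hβ
    rw [hF, hproj, hnorm, norm_smul, he₂, Real.norm_eq_abs, abs_of_nonneg hβ, mul_one]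
  set a : ℝ := Real.sqrt (1 - s^2) with hadef
  have ha : 0 < a := Real.sqrt_pos.mpr (by nlinarith)
  have ha2 : a^2 = 1 - s^2 := Real.sq_sqrt (by nlinarith)
  set y : V := a • e₁ + s • e₂ with hydef
  have hyt : ∀ t : ℝ, y + t • e₁ = (a + t) • e₁ + s • e₂ := by
    intro t; rw [hydef, add_smul]; abel
  have hne : ∀ α : ℝ, α • e₁ + s • e₂ ≠ (0:V) := by
    intro α h
    have h2 : (0:V) = s • e₂ := by rw [← hproj α s, h]; simp
    rcases smul_eq_zero.mp h2.symm with h3 | h3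
    · exact hs0.ne' h3
    · exact he₂0 h3
  have hud : ∀ t : ℝ, 0 < (a+t)^2 + s^2 := by intro t; positivity
  set g : ℝ → ℝ := fun t => ((a+t)^2 + s^2) * φ (s / Real.sqrt ((a+t)^2 + s^2))^2 / 2
    with hgdef
  have hgF : ∀ t : ℝ, F (y + t • e₁)^2/2 = g t := by
    intro t
    rw [hyt t, hFval (a+t) s hs0.le, hgdef]
    rw [mul_pow, Real.sq_sqrt (hud t).le]
  -- derivative of g
  have hφdiff : Differentiable ℝ φ := hφsmooth.differentiable (by simp)
  have hg' : ∀ t : ℝ, HasDerivAt g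
      ((a + t) * φ (s / Real.sqrt ((a+t)^2 + s^2)) *
        (φ (s / Real.sqrt ((a+t)^2 + s^2))
          - s / Real.sqrt ((a+t)^2 + s^2) * deriv φ (s / Real.sqrt ((a+t)^2 + s^2)))) t := by
    intro t
    have hupos := hud t
    have hu : HasDerivAt (fun t : ℝ => (a+t)^2 + s^2) (2*(a+t)) t := by
      have h1 : HasDerivAt (fun t : ℝ => a + t) 1 t := (hasDerivAt_id t).const_add a
      have := (h1.pow 2).add_const (s^2)
      simpa using this
    have hsq : HasDerivAt (fun t : ℝ => Real.sqrt ((a+t)^2 + s^2))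
        (2*(a+t) / (2*Real.sqrt ((a+t)^2 + s^2))) t := hu.sqrt hupos.ne'
    have hsqpos : 0 < Real.sqrt ((a+t)^2 + s^2) := Real.sqrt_pos.mpr hupos
    have hw : HasDerivAt (fun t : ℝ => s / Real.sqrt ((a+t)^2 + s^2))
        ((0 * Real.sqrt ((a+t)^2 + s^2) - s * (2*(a+t) / (2*Real.sqrt ((a+t)^2 + s^2))))
          / Real.sqrt ((a+t)^2 + s^2) ^ 2) t :=
      (hasDerivAt_const t s).div hsq hsqpos.ne'
    have hφ' : HasDerivAt φ (deriv φ (s / Real.sqrt ((a+t)^2 + s^2)))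
        (s / Real.sqrt ((a+t)^2 + s^2)) := (hφdiff _).hasDerivAt
    have hcomp := hφ'.comp t hw
    have hmain := (hu.mul (hcomp.pow 2)).div_const 2
    have heq : (a + t) * φ (s / Real.sqrt ((a+t)^2 + s^2)) *
        (φ (s / Real.sqrt ((a+t)^2 + s^2))
          - s / Real.sqrt ((a+t)^2 + s^2) * deriv φ (s / Real.sqrt ((a+t)^2 + s^2)))
        = (2*(a+t) * ((φ ∘ fun t => s / Real.sqrt ((a+t)^2 + s^2)) t) ^ 2
            + ((a+t)^2 + s^2) *
              (2 * ((φ ∘ fun t => s / Real.sqrt ((a+t)^2 + s^2)) t) ^ 1 *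
                (deriv φ (s / Real.sqrt ((a+t)^2 + s^2)) *
                  ((0 * Real.sqrt ((a+t)^2 + s^2)
                      - s * (2*(a+t) / (2*Real.sqrt ((a+t)^2 + s^2))))
                    / Real.sqrt ((a+t)^2 + s^2) ^ 2)))) / 2 := by
      have hr2 : Real.sqrt ((a+t)^2 + s^2) ^ 2 = (a+t)^2 + s^2 := Real.sq_sqrt hupos.le
      simp only [Function.comp]
      rw [← hr2]
      field_simp
      simp only [Real.sqrt_sq hsqpos.le]
      ring
    rw [heq]
    exact hmain
  -- second derivative positive
  have key : ∀ t : ℝ, 0 < deriv (deriv g) t := by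
    intro t
    have hy : y + t • e₁ ≠ 0 := by rw [hyt]; exact hne (a+t)
    have hc := hFconvex (y + t • e₁) hy e₁ he₁0
    have hfun : (fun r : ℝ => F (y + t • e₁ + r • e₁)^2/2) = fun r => g (t + r) := by
      funext r
      have : y + t • e₁ + r • e₁ = y + (t + r) • e₁ := by rw [add_smul]; abel
      rw [this, hgF]
    rw [hfun] at hc
    have h1 : deriv (fun r : ℝ => g (t + r)) = fun r => deriv g (t + r) :=
      funext fun r => deriv_comp_const_add g t r
    rw [h1, deriv_comp_const_add (deriv g) t 0, add_zero] at hc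
    exact hc
  have hmono : StrictMono (deriv g) := strictMono_of_deriv_pos key
  have h0 : deriv g (-a) = 0 := by
    rw [(hg' (-a)).deriv]
    simp
  have hd0 : deriv g 0 = a * φ s * (φ s - s * deriv φ s) := by
    rw [(hg' 0).deriv]
    have h1 : (a + 0)^2 + s^2 = 1 := by rw [add_zero]; nlinarith
    rw [h1, Real.sqrt_one, div_one, add_zero]
  have hlt : deriv g (-a) < deriv g 0 := hmono (by linarith)
  rw [h0, hd0] at hlt
  have hφs : 0 < φ s := hφpos s ⟨hs0.le, hs1.le⟩
  by_contra h
  push_neg at h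
  nlinarith [mul_pos ha hφs]
end

section
/- Let φ : [0,1] → ℝ be smooth and positive such that F(v) = |v|·φ(|v₂|/|v|) is a Minkowski norm on V = V₁ ⊕ V₂. Then for every s ∈ (0,1), φ(s) − (s − s⁻¹)·φ'(s) > 0. -/
open RealInnerProductSpace

/-- If `F v = ‖v‖ * φ(‖v₂‖/‖v‖)` is a Minkowski norm on `V = V₁ ⊕ V₁ᗮ`,
then `φ s - (s - s⁻¹) φ'(s) > 0` for all `s ∈ (0,1)`. -/
theorem stmt1
    (V : Type*) [NormedAddCommGroup V] [InnerProductSpace ℝ V] [FiniteDimensional ℝ V]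
    (V₁ : Submodule ℝ V) (hV₁ : V₁ ≠ ⊥) (hV₂ : V₁ᗮ ≠ ⊥)
    (φ : ℝ → ℝ) (hφsmooth : ContDiff ℝ (⊤ : ℕ∞) φ) (hφpos : ∀ s ∈ Set.Icc (0:ℝ) 1, 0 < φ s)
    (F : V → ℝ)
    (hF : ∀ v : V, F v = ‖v‖ * φ (‖(Submodule.orthogonalProjectionOnto V₁ᗮ v : V)‖ / ‖v‖))
    -- F is a Minkowski norm:
    (hFcont : Continuous F)
    (hFpos : ∀ v : V, v ≠ 0 → 0 < F v)
    (hFsmooth : ContDiffOn ℝ (⊤ : ℕ∞) F {(0:V)}ᶜ)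
    (hFhomog : ∀ (c : ℝ) (v : V), 0 < c → F (c • v) = c * F v)
    (hFconvex : ∀ y : V, y ≠ 0 → ∀ w : V, w ≠ 0 →
      0 < deriv (deriv (fun t : ℝ => F (y + t • w) ^ 2 / 2)) 0) :
    ∀ s ∈ Set.Ioo (0:ℝ) 1, 0 < φ s - (s - s⁻¹) * deriv φ s := by
  intro s hs
  obtain ⟨hs0, hs1⟩ := hs
  have hφs : 0 < φ s := hφpos s ⟨hs0.le, hs1.le⟩
  -- pick unit vectors
  obtain ⟨x₁, hx₁V, hx₁0⟩ := Submodule.exists_mem_ne_zero_of_ne_bot hV₁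
  obtain ⟨x₂, hx₂V, hx₂0⟩ := Submodule.exists_mem_ne_zero_of_ne_bot hV₂
  obtain ⟨e₁, he₁V, he₁⟩ : ∃ e : V, e ∈ V₁ ∧ ‖e‖ = 1 :=
    ⟨‖x₁‖⁻¹ • x₁, V₁.smul_mem _ hx₁V, norm_smul_inv_norm (𝕜 := ℝ) hx₁0⟩
  obtain ⟨e₂, he₂V, he₂⟩ : ∃ e : V, e ∈ V₁ᗮ ∧ ‖e‖ = 1 :=
    ⟨‖x₂‖⁻¹ • x₂, V₁ᗮ.smul_mem _ hx₂V, norm_smul_inv_norm (𝕜 := ℝ) hx₂0⟩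
  have he₂ne : e₂ ≠ 0 := by
    intro h; rw [h, norm_zero] at he₂; norm_num at he₂
  obtain ⟨c, hc2, hcpos⟩ : ∃ c : ℝ, c ^ 2 = 1 - s ^ 2 ∧ 0 < c :=
    ⟨Real.sqrt (1 - s ^ 2), Real.sq_sqrt (by nlinarith), Real.sqrt_pos.mpr (by nlinarith)⟩
  -- orthogonality
  have hinner : ∀ a b : ℝ, (inner ℝ (a • e₁) (b • e₂) : ℝ) = 0 := by
    intro a b
    have h0 : (inner ℝ e₁ e₂ : ℝ) = 0 := (Submodule.mem_orthogonal V₁ e₂).mp he₂V e₁ he₁V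
    rw [real_inner_smul_left, real_inner_smul_right, h0]; ring
  -- norm formula
  have hnorm : ∀ t : ℝ, ‖c • e₁ + t • e₂‖ = Real.sqrt (c ^ 2 + t ^ 2) := by
    intro t
    have hn1 : ‖c • e₁‖ = |c| := by rw [norm_smul, he₁, Real.norm_eq_abs, mul_one]
    have hn2 : ‖t • e₂‖ = |t| := by rw [norm_smul, he₂, Real.norm_eq_abs, mul_one]
    have h1 : ‖c • e₁ + t • e₂‖ ^ 2 = c ^ 2 + t ^ 2 := by
      rw [norm_add_sq_real, hinner, hn1, hn2, sq_abs, sq_abs]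
      ring
    rw [← h1, Real.sqrt_sq (norm_nonneg _)]
  -- projection formula
  have hproj : ∀ t : ℝ, ((Submodule.orthogonalProjectionOnto V₁ᗮ (c • e₁ + t • e₂) : V₁ᗮ) : V) = t • e₂ := by
    intro t
    have h1 : Submodule.orthogonalProjectionOnto V₁ᗮ e₁ = 0 :=
      Submodule.orthogonalProjectionOnto_eq_zero_iff.mpr (Submodule.le_orthogonal_orthogonal V₁ he₁V)
    have h2 : ((Submodule.orthogonalProjectionOnto V₁ᗮ e₂ : V₁ᗮ) : V) = e₂ :=
      Submodule.starProjection_eq_self_iff.mpr he₂V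
    rw [map_add, map_smul, map_smul, h1]
    push_cast
    rw [h2]
    simp
  -- key formula for F
  have key : ∀ t : ℝ, F (c • e₁ + t • e₂)
      = Real.sqrt (c ^ 2 + t ^ 2) * φ (|t| / Real.sqrt (c ^ 2 + t ^ 2)) := by
    intro t
    rw [hF, hproj, hnorm, norm_smul, he₂, Real.norm_eq_abs, mul_one]
  set g : ℝ → ℝ := fun t => F (c • e₁ + t • e₂) ^ 2 / 2 with hgdef
  have hy_ne : ∀ t : ℝ, c • e₁ + t • e₂ ≠ 0 := by
    intro t h
    have h1 := hnorm t
    rw [h, norm_zero] at h1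
    have h2 : (0:ℝ) < Real.sqrt (c ^ 2 + t ^ 2) :=
      Real.sqrt_pos.mpr (by nlinarith [pow_pos hcpos 2, sq_nonneg t])
    linarith
  -- g'' > 0 everywhere
  have hconv : ∀ t : ℝ, 0 < deriv (deriv g) t := by
    intro t
    have h := hFconvex (c • e₁ + t • e₂) (hy_ne t) e₂ he₂ne
    have heq : (fun u : ℝ => F ((c • e₁ + t • e₂) + u • e₂) ^ 2 / 2)
        = fun u => g (u + t) := by
      funext u
      have : (c • e₁ + t • e₂) + u • e₂ = c • e₁ + (u + t) • e₂ := by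
        rw [add_smul]; abel
      rw [this]
    rw [heq] at h
    have hd1 : deriv (fun u => g (u + t)) = fun u => deriv g (u + t) :=
      funext fun u => deriv_comp_add_const g t u
    rw [hd1] at h
    have hd2 : deriv (fun u => deriv g (u + t)) 0 = deriv (deriv g) (0 + t) :=
      deriv_comp_add_const (deriv g) t 0
    rw [hd2, zero_add] at h
    exact h
  -- g is even, hence deriv g 0 = 0
  have geven : (fun t : ℝ => g (-t)) = g := by
    funext t
    simp only [hgdef, key, abs_neg, neg_sq]
  have h0 : deriv g 0 = 0 := by
    have h := deriv_comp_neg g 0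
    rw [geven, neg_zero] at h
    linarith
  have hmono : StrictMono (deriv g) := strictMono_of_deriv_pos hconv
  have hgs : 0 < deriv g s := h0 ▸ hmono hs0
  -- compute deriv g s explicitly
  set G : ℝ → ℝ := fun t =>
    (Real.sqrt (c ^ 2 + t ^ 2) * φ (t / Real.sqrt (c ^ 2 + t ^ 2))) ^ 2 / 2 with hGdef
  have heqn : g =ᶠ[nhds s] G := by
    filter_upwards [Ioi_mem_nhds hs0] with t ht
    simp only [hgdef, hGdef, key, abs_of_pos (Set.mem_Ioi.mp ht)]
  have hcs : c ^ 2 + s ^ 2 = 1 := by rw [hc2]; ring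
  have hrs : Real.sqrt (c ^ 2 + s ^ 2) = 1 := by rw [hcs, Real.sqrt_one]
  have hu : HasDerivAt (fun t : ℝ => c ^ 2 + t ^ 2) (2 * s) s := by
    simpa using (hasDerivAt_pow 2 s).const_add (c ^ 2)
  have hr : HasDerivAt (fun t : ℝ => Real.sqrt (c ^ 2 + t ^ 2)) s s := by
    have h := hu.sqrt (by rw [hcs]; norm_num)
    have hv : 2 * s / (2 * Real.sqrt (c ^ 2 + s ^ 2)) = s := by
      rw [hrs]; field_simp
    rwa [hv] at h
  have hq : HasDerivAt (fun t : ℝ => t / Real.sqrt (c ^ 2 + t ^ 2)) (1 - s ^ 2) s := by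
    have h := (hasDerivAt_id s).div hr (by rw [hrs]; norm_num)
    refine h.congr_deriv ?_
    rw [hrs]
    simp only [id_eq]
    ring
  have hqs : s / Real.sqrt (c ^ 2 + s ^ 2) = s := by rw [hrs, div_one]
  have hφd : HasDerivAt φ (deriv φ s) (s / Real.sqrt (c ^ 2 + s ^ 2)) := by
    rw [hqs]
    exact ((hφsmooth.differentiable (by simp)) s).hasDerivAt
  have hcomp : HasDerivAt (fun t : ℝ => φ (t / Real.sqrt (c ^ 2 + t ^ 2)))
      (deriv φ s * (1 - s ^ 2)) s := hφd.comp s hq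
  have hprod : HasDerivAt
      (fun t : ℝ => Real.sqrt (c ^ 2 + t ^ 2) * φ (t / Real.sqrt (c ^ 2 + t ^ 2)))
      (s * φ s + deriv φ s * (1 - s ^ 2)) s := by
    have h := hr.mul hcomp
    rw [hqs, hrs] at h
    refine h.congr_deriv ?_
    ring
  have hG : HasDerivAt G (φ s * (s * φ s + (1 - s ^ 2) * deriv φ s)) s := by
    have h := (hprod.pow 2).div_const 2
    refine h.congr_deriv ?_
    rw [hqs, hrs]
    ring
  have hderiv : deriv g s = φ s * (s * φ s + (1 - s ^ 2) * deriv φ s) := by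
    rw [heqn.deriv_eq, hG.deriv]
  rw [hderiv] at hgs
  have hsi : s * s⁻¹ = 1 := mul_inv_cancel₀ hs0.ne'
  have key2 : 0 < (s * φ s) * (φ s - (s - s⁻¹) * deriv φ s) := by
    have expand : (s * φ s) * (φ s - (s - s⁻¹) * deriv φ s)
        = φ s * (s * φ s + (1 - s ^ 2) * deriv φ s) := by
      field_simp
      ring
    rw [expand]
    exact hgs
  nlinarith [key2, mul_pos hs0 hφs]
end

section
/- Let V = V₁ ⊕ V₂ be an orthogonal decomposition of a finite-dimensional real inner product space with inner product ⟨·,·⟩, and let F(v) = |v|·φ(|v₂|/|v|) be a Minkowski norm of (α₁,α₂)-type. For U = U₁ + U₂ with U₁ ∈ V₁, U₂ ∈ V₂, U ≠ 0, θ = |U₂|/|U| ∈ (0,1), and any V ∈ V, the fundamental tensor satisfies g_U(U,V) = φ(θ)·⟨(φ(θ) − θφ'(θ))U₁ + (φ(θ) − (θ − θ⁻¹)φ'(θ))U₂, V⟩, where g_U(U,V) = (1/2)·(d/dt)F²(U+tV)|_{t=0}. -/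
open RealInnerProductSpace

/-- fundamental tensor formula
`g_U(U,W) = φ(θ)⟨(φ(θ)−θφ'(θ))U₁ + (φ(θ)−(θ−θ⁻¹)φ'(θ))U₂, W⟩` for `θ = ‖U₂‖/‖U‖ ∈ (0,1)`. -/
theorem stmt3
    (V : Type*) [NormedAddCommGroup V] [InnerProductSpace ℝ V] [FiniteDimensional ℝ V]
    (V₁ : Submodule ℝ V) (hV₁ : V₁ ≠ ⊥) (hV₂ : V₁ᗮ ≠ ⊥)
    (φ : ℝ → ℝ) (hφsmooth : ContDiff ℝ (⊤ : ℕ∞) φ) (hφpos : ∀ s ∈ Set.Icc (0:ℝ) 1, 0 < φ s)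
    (F : V → ℝ)
    (hF : ∀ v : V, F v = ‖v‖ * φ (‖(Submodule.orthogonalProjectionOnto V₁ᗮ v : V)‖ / ‖v‖))
    -- F is a Minkowski norm:
    (hFcont : Continuous F)
    (hFpos : ∀ v : V, v ≠ 0 → 0 < F v)
    (hFsmooth : ContDiffOn ℝ (⊤ : ℕ∞) F {(0:V)}ᶜ)
    (hFhomog : ∀ (c : ℝ) (v : V), 0 < c → F (c • v) = c * F v)
    (hFconvex : ∀ y : V, y ≠ 0 → ∀ w : V, w ≠ 0 →
      0 < deriv (deriv (fun r : ℝ => F (y + r • w) ^ 2 / 2)) 0)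
    (U₁ U₂ : V) (hU₁ : U₁ ∈ V₁) (hU₂ : U₂ ∈ V₁ᗮ)
    (U : V) (hU : U = U₁ + U₂) (hU0 : U ≠ 0)
    (θ : ℝ) (hθdef : θ = ‖U₂‖ / ‖U‖) (hθ : θ ∈ Set.Ioo (0:ℝ) 1)
    (W : V) :
    (1 / 2) * deriv (fun t : ℝ => F (U + t • W) ^ 2) 0 =
      φ θ * ⟪(φ θ - θ * deriv φ θ) • U₁ +
        (φ θ - (θ - θ⁻¹) * deriv φ θ) • U₂, W⟫ := by
  classical
  set P := Submodule.orthogonalProjectionOnto V₁ᗮ with hP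
  set a : ℝ := ‖U‖ with ha
  set b : ℝ := ‖U₂‖ with hb
  have ha0 : 0 < a := norm_pos_iff.mpr hU0
  have hb0 : 0 < b := by
    by_contra h
    push_neg at h
    have : b = 0 := le_antisymm h (norm_nonneg _)
    rw [hθdef, this] at hθ
    simpa using hθ.1
  have haz : a ≠ 0 := ha0.ne'
  have hbz : b ≠ 0 := hb0.ne'
  -- projection facts
  have hPU2 : (P U₂ : V) = U₂ := Submodule.starProjection_eq_self_iff.mpr hU₂
  have hPU1 : (P U₁ : V) = 0 := by
    have : P U₁ = 0 :=
      Submodule.orthogonalProjectionOnto_orthogonal_apply_eq_zero hU₁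
    simp [this]
  have hPU : (P U : V) = U₂ := by
    rw [hU, map_add, Submodule.coe_add, hPU1, hPU2, zero_add]
  have hip2 : ⟪U₂, (P W : V)⟫ = ⟪U₂, W⟫ := by
    have h := Submodule.inner_orthogonalProjectionOnto_eq_of_mem_left (𝕜 := ℝ) (K := V₁ᗮ) ⟨U₂, hU₂⟩ W
    rw [Submodule.coe_inner] at h
    exact h
  set ip : ℝ := ⟪U, W⟫ with hipdef
  set ip2 : ℝ := ⟪U₂, W⟫ with hip2def
  set w1 : ℝ := ‖W‖ ^ 2 with hw1
  set w2 : ℝ := ‖(P W : V)‖ ^ 2 with hw2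
  -- the two quadratic polynomials
  set A : ℝ → ℝ := fun t => a ^ 2 + 2 * ip * t + w1 * t ^ 2 with hA
  set B : ℝ → ℝ := fun t => b ^ 2 + 2 * ip2 * t + w2 * t ^ 2 with hB
  have hA0 : A 0 = a ^ 2 := by simp [hA]
  have hB0 : B 0 = b ^ 2 := by simp [hB]
  have hsA0 : Real.sqrt (A 0) = a := by rw [hA0, Real.sqrt_sq ha0.le]
  have hsB0 : Real.sqrt (B 0) = b := by rw [hB0, Real.sqrt_sq hb0.le]
  -- pointwise identity
  have hpt : (fun t : ℝ => F (U + t • W) ^ 2) =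
      fun t : ℝ => A t * φ (Real.sqrt (B t) / Real.sqrt (A t)) ^ 2 := by
    funext t
    have hnA : ‖U + t • W‖ ^ 2 = A t := by
      rw [hA]
      rw [@norm_add_sq_real, real_inner_smul_right, norm_smul]
      simp [mul_pow, sq_abs, w1]
      ring
    have hnB : ‖(P (U + t • W) : V)‖ ^ 2 = B t := by
      have hPsum : (P (U + t • W) : V) = U₂ + t • (P W : V) := by
        rw [map_add, map_smul, Submodule.coe_add, Submodule.coe_smul, hPU]
      rw [hB, hPsum]
      rw [@norm_add_sq_real, real_inner_smul_right, norm_smul]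
      simp [mul_pow, sq_abs, w2, hip2]
      ring
    have h1 : ‖U + t • W‖ = Real.sqrt (A t) := by
      rw [← hnA, Real.sqrt_sq (norm_nonneg _)]
    have h2 : ‖(P (U + t • W) : V)‖ = Real.sqrt (B t) := by
      rw [← hnB, Real.sqrt_sq (norm_nonneg _)]
    rw [hF, h1, h2, mul_pow, Real.sq_sqrt (by rw [← hnA]; positivity)]
  rw [hpt]
  -- derivatives of A and B at 0
  have hdA : HasDerivAt A (2 * ip) 0 := by
    have h1 : HasDerivAt (fun t : ℝ => 2 * ip * t) (2 * ip) 0 := by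
      simpa using (hasDerivAt_id (0:ℝ)).const_mul (2 * ip)
    have h2 : HasDerivAt (fun t : ℝ => w1 * t ^ 2) 0 0 := by
      simpa using (hasDerivAt_pow 2 (0:ℝ)).const_mul w1
    exact (((hasDerivAt_const (0:ℝ) (a ^ 2)).add h1).add h2).congr_deriv (by ring)
  have hdB : HasDerivAt B (2 * ip2) 0 := by
    have h1 : HasDerivAt (fun t : ℝ => 2 * ip2 * t) (2 * ip2) 0 := by
      simpa using (hasDerivAt_id (0:ℝ)).const_mul (2 * ip2)
    have h2 : HasDerivAt (fun t : ℝ => w2 * t ^ 2) 0 0 := by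
      simpa using (hasDerivAt_pow 2 (0:ℝ)).const_mul w2
    exact (((hasDerivAt_const (0:ℝ) (b ^ 2)).add h1).add h2).congr_deriv (by ring)
  have hAne : A 0 ≠ 0 := by rw [hA0]; positivity
  have hBne : B 0 ≠ 0 := by rw [hB0]; positivity
  have hsA : HasDerivAt (fun t => Real.sqrt (A t)) (ip / a) 0 := by
    have := hdA.sqrt hAne
    convert this using 1
    rw [hsA0]
    field_simp
    try ring
  have hsB : HasDerivAt (fun t => Real.sqrt (B t)) (ip2 / b) 0 := by
    have := hdB.sqrt hBne
    convert this using 1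
    rw [hsB0]
    field_simp
    try ring
  have hsAne : Real.sqrt (A 0) ≠ 0 := by rw [hsA0]; exact haz
  -- ratio
  have hr : HasDerivAt (fun t => Real.sqrt (B t) / Real.sqrt (A t))
      ((ip2 / b * a - b * (ip / a)) / a ^ 2) 0 := by
    have := hsB.div hsA hsAne
    refine this.congr_deriv ?_
    rw [hsA0, hsB0]
    try ring
  have hr0 : Real.sqrt (B 0) / Real.sqrt (A 0) = θ := by
    rw [hsA0, hsB0, hθdef]
  -- φ composed
  have hφd : HasDerivAt φ (deriv φ θ) (Real.sqrt (B 0) / Real.sqrt (A 0)) := by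
    rw [hr0]
    exact ((hφsmooth.differentiable (by simp)) θ).hasDerivAt
  have hφc : HasDerivAt (fun t => φ (Real.sqrt (B t) / Real.sqrt (A t)))
      (deriv φ θ * ((ip2 / b * a - b * (ip / a)) / a ^ 2)) 0 := by
    exact hφd.comp 0 hr
  have hsq : HasDerivAt (fun t => φ (Real.sqrt (B t) / Real.sqrt (A t)) ^ 2)
      (2 * φ θ * (deriv φ θ * ((ip2 / b * a - b * (ip / a)) / a ^ 2))) 0 := by
    have := hφc.pow 2
    refine this.congr_deriv ?_
    rw [hr0]
    try ring
  have hmain : HasDerivAt (fun t => A t * φ (Real.sqrt (B t) / Real.sqrt (A t)) ^ 2)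
      (2 * ip * φ θ ^ 2 +
        a ^ 2 * (2 * φ θ * (deriv φ θ * ((ip2 / b * a - b * (ip / a)) / a ^ 2)))) 0 := by
    have := hdA.mul hsq
    refine this.congr_deriv ?_
    rw [hr0, hA0]
    try ring
  rw [hmain.deriv]
  -- final algebra
  have hip1 : ⟪U₁, W⟫ = ip - ip2 := by
    rw [hipdef, hip2def, hU, inner_add_left]; ring
  rw [inner_add_left, real_inner_smul_left, real_inner_smul_left, hip1, ← hip2def]
  have hθval : θ = b / a := by rw [hθdef]
  rw [hθval]
  have hinv : (b / a)⁻¹ = a / b := by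
    rw [inv_div]
  rw [hinv]
  field_simp
  ring
end

section
/- Let V = V₁ ⊕ V₂ be an orthogonal decomposition of a real inner product space and F(v) = |v|·φ(|v₂|/|v|) an (α₁,α₂)-Minkowski norm. If U is a nonzero vector lying entirely in V₁ or entirely in V₂, then for any W ∈ V, g_U(U,W) = 0 if and only if ⟨U,W⟩ = 0 (i.e. the g_U-orthogonal complement of U coincides with its ⟨·,·⟩-orthogonal complement). -/
open RealInnerProductSpace

private lemma polyderiv (a b d : ℝ) : deriv (fun t : ℝ => a + b * t + d * t ^ 2) 0 = b := by
  have h : HasDerivAt (fun t : ℝ => a + b * t + d * t ^ 2)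
      (b * 1 + d * (↑2 * (0:ℝ) ^ (2 - 1))) 0 :=
    (((hasDerivAt_id (0:ℝ)).const_mul b).const_add a).add ((hasDerivAt_pow 2 (0:ℝ)).const_mul d)
  simpa using h.deriv

private lemma even_deriv_zero (f : ℝ → ℝ) (h : ∀ t, f (-t) = f t) : deriv f 0 = 0 := by
  have h1 : deriv f 0 = - deriv f 0 := by
    conv_lhs => rw [show f = (fun t => f (-t)) from funext fun t => (h t).symm]
    rw [deriv_comp_neg]
    simp
  linarith

set_option maxHeartbeats 1000000 in
/-- for `U` nonzero lying in `V₁` or in `V₂ = V₁ᗮ`, the `g_U`-orthogonal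
complement of `U` coincides with its inner-product orthogonal complement. -/
theorem stmt4
    (V : Type*) [NormedAddCommGroup V] [InnerProductSpace ℝ V] [FiniteDimensional ℝ V]
    (V₁ : Submodule ℝ V) (hV₁ : V₁ ≠ ⊥) (hV₂ : V₁ᗮ ≠ ⊥)
    (φ : ℝ → ℝ) (hφsmooth : ContDiff ℝ (⊤ : ℕ∞) φ) (hφpos : ∀ s ∈ Set.Icc (0:ℝ) 1, 0 < φ s)
    (F : V → ℝ)
    (hF : ∀ v : V, F v = ‖v‖ * φ (‖(V₁ᗮ.orthogonalProjection v : V)‖ / ‖v‖))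
    -- F is a Minkowski norm:
    (hFcont : Continuous F)
    (hFpos : ∀ v : V, v ≠ 0 → 0 < F v)
    (hFsmooth : ContDiffOn ℝ (⊤ : ℕ∞) F {(0:V)}ᶜ)
    (hFhomog : ∀ (c : ℝ) (v : V), 0 < c → F (c • v) = c * F v)
    (hFconvex : ∀ y : V, y ≠ 0 → ∀ w : V, w ≠ 0 →
      0 < deriv (deriv (fun r : ℝ => F (y + r • w) ^ 2 / 2)) 0)
    (U : V) (hU : U ∈ (V₁ : Set V) ∪ (V₁ᗮ : Set V)) (hU0 : U ≠ 0)
    (W : V) :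
    (1 / 2) * deriv (fun t : ℝ => F (U + t • W) ^ 2) 0 = 0 ↔ ⟪U, W⟫ = 0 := by
  classical
  set G : V → ℝ := fun v => F v ^ 2 with hGdef
  have hFdiff : DifferentiableAt ℝ F U :=
    (hFsmooth.contDiffAt ((isOpen_compl_singleton).mem_nhds (by simpa using hU0))).differentiableAt
      (by simp)
  have hGdiff : DifferentiableAt ℝ G U := hFdiff.pow 2
  set D := fderiv ℝ G U with hDdef
  have key : ∀ W' : V, deriv (fun t : ℝ => F (U + t • W') ^ 2) 0 = D W' := by
    intro W'
    have hline : HasDerivAt (fun t : ℝ => U + t • W') W' 0 := by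
      simpa using ((hasDerivAt_id (0:ℝ)).smul_const W').const_add U
    have hcomp : HasDerivAt (fun t : ℝ => G (U + t • W')) (D W') 0 := by
      have hfd : HasFDerivAt G D ((fun t : ℝ => U + t • W') 0) := by
        simpa using hGdiff.hasFDerivAt
      exact hfd.comp_hasDerivAt 0 hline
    exact hcomp.deriv
  -- W = W₁ + W₂
  set W₁ : V := (Submodule.orthogonalProjection V₁ W : V) with hW₁def
  set W₂ : V := (Submodule.orthogonalProjection V₁ᗮ W : V) with hW₂def
  have hW₁mem : W₁ ∈ V₁ := (Submodule.orthogonalProjection V₁ W).2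
  have hW₂mem : W₂ ∈ V₁ᗮ := (Submodule.orthogonalProjection V₁ᗮ W).2
  have hWsum : W₁ + W₂ = W := V₁.starProjection_add_starProjection_orthogonal W
  have hDsum : D W = D W₁ + D W₂ := by rw [← hWsum, map_add]
  -- main value computation, depending on which side U lies
  rcases hU with hU1 | hU2
  · -- U ∈ V₁
    have hinner2 : ⟪U, W₂⟫ = 0 := Submodule.inner_right_of_mem_orthogonal hU1 hW₂mem
    have hφ0 : (0:ℝ) < φ 0 := hφpos 0 (by constructor <;> norm_num)
    -- tangential part
    have hval1 : deriv (fun t : ℝ => F (U + t • W₁) ^ 2) 0 = φ 0 ^ 2 * (2 * ⟪U, W₁⟫) := by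
      have heq : (fun t : ℝ => F (U + t • W₁) ^ 2) =
          fun t : ℝ => φ 0 ^ 2 * ‖U‖ ^ 2 + (φ 0 ^ 2 * (2 * ⟪U, W₁⟫)) * t
            + (φ 0 ^ 2 * ‖W₁‖ ^ 2) * t ^ 2 := by
        funext t
        have hmem : U + t • W₁ ∈ V₁ := V₁.add_mem hU1 (V₁.smul_mem _ hW₁mem)
        have hP : (Submodule.orthogonalProjection V₁ᗮ (U + t • W₁) : V) = 0 := 
          Submodule.starProjection_orthogonal_apply_eq_zero hmem
        rw [hF, hP]
        simp only [norm_zero, zero_div]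
        rw [mul_pow, norm_add_sq_real, real_inner_smul_right, norm_smul]
        simp only [Real.norm_eq_abs, mul_pow, sq_abs]
        ring
      rw [heq, polyderiv]
    -- normal part is even
    have hval2 : deriv (fun t : ℝ => F (U + t • W₂) ^ 2) 0 = 0 := by
      apply even_deriv_zero
      intro t
      have hP : ∀ s : ℝ, (Submodule.orthogonalProjection V₁ᗮ (U + s • W₂) : V) = s • W₂ := by
        intro s
        have h1 : (Submodule.orthogonalProjection V₁ᗮ U : V) = 0 := 
          Submodule.starProjection_orthogonal_apply_eq_zero hU1
        have h2 : (Submodule.orthogonalProjection V₁ᗮ W₂ : V) = W₂ :=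
          Submodule.starProjection_eq_self_iff.mpr hW₂mem
        rw [map_add, map_smul, Submodule.coe_add, Submodule.coe_smul, h1, h2, zero_add]
      have hnorm : ‖U + (-t) • W₂‖ = ‖U + t • W₂‖ := by
        have hsq : ‖U + (-t) • W₂‖ ^ 2 = ‖U + t • W₂‖ ^ 2 := by
          rw [norm_add_sq_real, norm_add_sq_real, real_inner_smul_right,
            real_inner_smul_right, hinner2, norm_smul, norm_smul]
          simp only [Real.norm_eq_abs, mul_pow, sq_abs]
          ring
        have h := congrArg Real.sqrt hsq
        rwa [Real.sqrt_sq (norm_nonneg _), Real.sqrt_sq (norm_nonneg _)] at h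
      rw [hF, hF, hP, hP, hnorm]
      congr 2
      rw [norm_smul, norm_smul]
      simp
    rw [key W, hDsum, ← key W₁, ← key W₂, hval1, hval2]
    have hinnerW : ⟪U, W⟫ = ⟪U, W₁⟫ := by
      rw [← hWsum, inner_add_right, hinner2, add_zero]
    rw [hinnerW]
    constructor
    · intro h
      have : φ 0 ^ 2 * ⟪U, W₁⟫ = 0 := by linarith
      rcases mul_eq_zero.mp this with h' | h'
      · exact absurd h' (by positivity)
      · exact h'
    · intro h; rw [h]; ring
  · -- U ∈ V₁ᗮ
    have hinner1 : ⟪U, W₁⟫ = 0 := Submodule.inner_left_of_mem_orthogonal hW₁mem hU2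
    have hφ1 : (0:ℝ) < φ 1 := hφpos 1 (by constructor <;> norm_num)
    -- normal part
    have hval2 : deriv (fun t : ℝ => F (U + t • W₂) ^ 2) 0 = φ 1 ^ 2 * (2 * ⟪U, W₂⟫) := by
      have heq : (fun t : ℝ => F (U + t • W₂) ^ 2) =
          fun t : ℝ => φ 1 ^ 2 * ‖U‖ ^ 2 + (φ 1 ^ 2 * (2 * ⟪U, W₂⟫)) * t
            + (φ 1 ^ 2 * ‖W₂‖ ^ 2) * t ^ 2 := by
        funext t
        have hmem : U + t • W₂ ∈ V₁ᗮ := V₁ᗮ.add_mem hU2 (V₁ᗮ.smul_mem _ hW₂mem)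
        have hsq : F (U + t • W₂) ^ 2 = φ 1 ^ 2 * ‖U + t • W₂‖ ^ 2 := by
          by_cases h0 : U + t • W₂ = 0
          · rw [h0, hF]; simp
          · have hP : (Submodule.orthogonalProjection V₁ᗮ (U + t • W₂) : V) = U + t • W₂ :=
              Submodule.starProjection_eq_self_iff.mpr hmem
            rw [hF, hP, div_self (norm_ne_zero_iff.mpr h0)]
            ring
        rw [hsq, norm_add_sq_real, real_inner_smul_right, norm_smul]
        simp only [Real.norm_eq_abs, mul_pow, sq_abs]
        ring
      rw [heq, polyderiv]
    -- tangential part is even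
    have hval1 : deriv (fun t : ℝ => F (U + t • W₁) ^ 2) 0 = 0 := by
      apply even_deriv_zero
      intro t
      have hP : ∀ s : ℝ, (Submodule.orthogonalProjection V₁ᗮ (U + s • W₁) : V) = U := by
        intro s
        have h1 : (Submodule.orthogonalProjection V₁ᗮ U : V) = U :=
          Submodule.starProjection_eq_self_iff.mpr hU2
        have h2 : (Submodule.orthogonalProjection V₁ᗮ W₁ : V) = 0 := 
          Submodule.starProjection_orthogonal_apply_eq_zero hW₁mem
        rw [map_add, map_smul, Submodule.coe_add, Submodule.coe_smul, h1, h2, smul_zero,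
          add_zero]
      have hnorm : ‖U + (-t) • W₁‖ = ‖U + t • W₁‖ := by
        have hsq : ‖U + (-t) • W₁‖ ^ 2 = ‖U + t • W₁‖ ^ 2 := by
          rw [norm_add_sq_real, norm_add_sq_real, real_inner_smul_right,
            real_inner_smul_right, hinner1, norm_smul, norm_smul]
          simp only [Real.norm_eq_abs, mul_pow, sq_abs]
          ring
        have h := congrArg Real.sqrt hsq
        rwa [Real.sqrt_sq (norm_nonneg _), Real.sqrt_sq (norm_nonneg _)] at h
      rw [hF, hF, hP, hP, hnorm]
    rw [key W, hDsum, ← key W₁, ← key W₂, hval1, hval2]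
    have hinnerW : ⟪U, W⟫ = ⟪U, W₂⟫ := by
      rw [← hWsum, inner_add_right, hinner1, zero_add]
    rw [hinnerW]
    constructor
    · intro h
      have : φ 1 ^ 2 * ⟪U, W₂⟫ = 0 := by linarith
      rcases mul_eq_zero.mp this with h' | h'
      · exact absurd h' (by positivity)
      · exact h'
    · intro h; rw [h]; ring
end

section
/- Let 𝔤 = 𝔥 ⊕ 𝔪 be an orthogonal reductive decomposition with respect to an ad-invariant inner product on a compact-type Lie algebra 𝔤, and 𝔪 = 𝔪₁ ⊕ 𝔪₂ orthogonal with [𝔥,𝔪ᵢ] ⊆ 𝔪ᵢ. Suppose for all nonzero v₁ ∈ 𝔪₁, v₂ ∈ 𝔪₂ and all positive reals c₁, c₂ there exists u ∈ 𝔥 with [u, c₁v₁ + c₂v₂] + [v₁,v₂]_𝔪 = 0. Then for any smooth positive φ : [0,1] → ℝ making F(v) = |v|φ(|v₂|/|v|) a Minkowski norm, and any nonzero v = v₁+v₂ ∈ 𝔪 with v₁ ≠ 0 ≠ v₂ and φ'(θ) ≠ 0 at θ = |v₂|/|v|, there exists u' ∈ 𝔥 such that X = u' + v satisfies ⟨(φ(θ)−θφ'(θ))[X,Z]_𝔪,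 v₁⟩ + ⟨(φ(θ)−(θ−θ⁻¹)φ'(θ))[X,Z]_𝔪, v₂⟩ = 0 for all Z ∈ 𝔪. -/
open RealInnerProductSpace

/-- if for all nonzero `v₁ ∈ 𝔪₁`, `v₂ ∈ 𝔪₂` and positive `c₁, c₂` there
is `u ∈ 𝔥` with `[u, c₁v₁ + c₂v₂] + [v₁,v₂]_𝔪 = 0`, then the geodesic-vector equation
for the standard `(α₁,α₂)`-metric admits a solution `u' ∈ 𝔥`. -/
theorem stmt6
    (L : Type*) [NormedAddCommGroup L] [InnerProductSpace ℝ L] [FiniteDimensional ℝ L]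
    (B : L →ₗ[ℝ] L →ₗ[ℝ] L)   -- the Lie bracket
    (hanti : ∀ x y : L, B x y = - B y x)
    (hjacobi : ∀ x y z : L, B (B x y) z + B (B y z) x + B (B z x) y = 0)
    (had : ∀ x y z : L, ⟪B x y, z⟫ = -⟪y, B x z⟫)
    (𝔥 : Submodule ℝ L) (h𝔥 : ∀ x ∈ 𝔥, ∀ y ∈ 𝔥, B x y ∈ 𝔥)
    (𝔪 𝔪₁ 𝔪₂ : Submodule ℝ L) (h𝔪 : 𝔪 = 𝔥ᗮ)
    (hsum : 𝔪₁ ⊔ 𝔪₂ = 𝔪)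
    (horth : ∀ x ∈ 𝔪₁, ∀ y ∈ 𝔪₂, ⟪x, y⟫ = 0)
    (hbr1 : ∀ u ∈ 𝔥, ∀ x ∈ 𝔪₁, B u x ∈ 𝔪₁)
    (hbr2 : ∀ u ∈ 𝔥, ∀ x ∈ 𝔪₂, B u x ∈ 𝔪₂)
    -- hypothesis: the algebraic condition (3) of Theorem 2
    (hGO : ∀ v₁ ∈ 𝔪₁, ∀ v₂ ∈ 𝔪₂, v₁ ≠ 0 → v₂ ≠ 0 → ∀ c₁ c₂ : ℝ, 0 < c₁ → 0 < c₂ →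
      ∃ u ∈ 𝔥, B u (c₁ • v₁ + c₂ • v₂) + (↑(𝔪.orthogonalProjection (B v₁ v₂)) : L) = 0)
    -- the function φ of a standard (α₁,α₂)-Minkowski norm
    (φ : ℝ → ℝ) (hφ : ContDiff ℝ (⊤ : ℕ∞) φ) (hφpos : ∀ s ∈ Set.Icc (0:ℝ) 1, 0 < φ s)
    (hreg1 : ∀ s ∈ Set.Ioo (0:ℝ) 1, 0 < φ s - s * deriv φ s)
    (hreg2 : ∀ s ∈ Set.Ioo (0:ℝ) 1, 0 < φ s - (s - s⁻¹) * deriv φ s)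
    (v₁ : L) (hv₁ : v₁ ∈ 𝔪₁) (hv₁0 : v₁ ≠ 0)
    (v₂ : L) (hv₂ : v₂ ∈ 𝔪₂) (hv₂0 : v₂ ≠ 0)
    (θ : ℝ) (hθ : θ = ‖v₂‖ / ‖v₁ + v₂‖) (hθd : deriv φ θ ≠ 0) :
    ∃ u' ∈ 𝔥, ∀ Z ∈ 𝔪,
      (φ θ - θ * deriv φ θ) *
          ⟪(↑(𝔪.orthogonalProjection (B (u' + v₁ + v₂) Z)) : L), v₁⟫
        + (φ θ - (θ - θ⁻¹) * deriv φ θ) *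
          ⟪(↑(𝔪.orthogonalProjection (B (u' + v₁ + v₂) Z)) : L), v₂⟫ = 0 := by

  -- basic setup
  have h𝔪₁ : 𝔪₁ ≤ 𝔪 := hsum ▸ le_sup_left
  have h𝔪₂ : 𝔪₂ ≤ 𝔪 := hsum ▸ le_sup_right
  have hinner : ⟪v₁, v₂⟫ = 0 := horth v₁ hv₁ v₂ hv₂
  have hn1 : 0 < ‖v₁‖ := norm_pos_iff.mpr hv₁0
  have hn2 : 0 < ‖v₂‖ := norm_pos_iff.mpr hv₂0
  have hsq : ‖v₁ + v₂‖ ^ 2 = ‖v₁‖ ^ 2 + ‖v₂‖ ^ 2 := by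
    rw [norm_add_sq_real, hinner]; ring
  have hlt : ‖v₂‖ < ‖v₁ + v₂‖ := by nlinarith [norm_nonneg (v₁ + v₂)]
  have hden : 0 < ‖v₁ + v₂‖ := lt_of_le_of_lt (norm_nonneg v₂) hlt
  have hθ0 : 0 < θ := by rw [hθ]; exact div_pos hn2 hden
  have hθ1 : θ < 1 := by rw [hθ]; exact (div_lt_one hden).mpr hlt
  set a : ℝ := φ θ - θ * deriv φ θ with ha_def
  set b : ℝ := φ θ - (θ - θ⁻¹) * deriv φ θ with hb_def
  have ha : 0 < a := hreg1 θ ⟨hθ0, hθ1⟩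
  have hb : 0 < b := hreg2 θ ⟨hθ0, hθ1⟩
  have hba : b - a = θ⁻¹ * deriv φ θ := by rw [ha_def, hb_def]; ring
  have hne : b - a ≠ 0 := by
    rw [hba]; exact mul_ne_zero (inv_ne_zero (ne_of_gt hθ0)) hθd
  have h11 : B v₁ v₁ = 0 := by
    have h := hanti v₁ v₁
    have h2 : (2:ℝ) • B v₁ v₁ = 0 := by
      rw [two_smul]; nth_rewrite 2 [h]; simp
    simpa using (smul_eq_zero.mp h2).resolve_left two_ne_zero
  -- key algebraic solution
  have key : ∃ u' ∈ 𝔥, a • B u' v₁ + b • B u' v₂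
      + (b - a) • (↑(𝔪.orthogonalProjection (B v₁ v₂)) : L) = 0 := by
    rcases hne.lt_or_gt with h | h
    · -- b - a < 0
      have hpos : 0 < a - b := by linarith
      obtain ⟨u, hu, heq⟩ := hGO (-v₁) (neg_mem hv₁) (-v₂) (neg_mem hv₂)
        (neg_ne_zero.mpr hv₁0) (neg_ne_zero.mpr hv₂0) (a / (a - b)) (b / (a - b))
        (div_pos ha hpos) (div_pos hb hpos)
      refine ⟨u, hu, ?_⟩
      have hB : B (-v₁) (-v₂) = B v₁ v₂ := by simp
      rw [hB] at heq
      have h2 := congrArg (fun x => (a - b) • x) heq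
      simp only [smul_add, smul_zero, ← map_smul, smul_smul,
        mul_div_cancel₀ a hpos.ne', mul_div_cancel₀ b hpos.ne'] at h2
      simp only [smul_neg, map_add, map_smul, map_neg] at h2
      linear_combination (norm := module) -h2
    · -- 0 < b - a
      obtain ⟨u, hu, heq⟩ := hGO v₁ hv₁ v₂ hv₂ hv₁0 hv₂0 (a / (b - a)) (b / (b - a))
        (div_pos ha h) (div_pos hb h)
      refine ⟨u, hu, ?_⟩
      have h2 := congrArg (fun x => (b - a) • x) heq
      simp only [smul_add, smul_zero, ← map_smul, smul_smul,
        mul_div_cancel₀ a hne, mul_div_cancel₀ b hne] at h2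
      simp only [map_add, map_smul] at h2
      linear_combination (norm := module) h2
  obtain ⟨u', hu', key⟩ := key
  refine ⟨u', hu', fun Z hZ => ?_⟩
  set w := B (u' + v₁ + v₂) Z with hw
  have hp1 : ⟪(↑(𝔪.orthogonalProjection w) : L), v₁⟫ = ⟪w, v₁⟫ := by
    have h := Submodule.starProjection_inner_eq_zero (K := 𝔪) w v₁ (h𝔪₁ hv₁)
    rw [inner_sub_left, Submodule.starProjection_apply] at h; linarith
  have hp2 : ⟪(↑(𝔪.orthogonalProjection w) : L), v₂⟫ = ⟪w, v₂⟫ := by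
    have h := Submodule.starProjection_inner_eq_zero (K := 𝔪) w v₂ (h𝔪₂ hv₂)
    rw [inner_sub_left, Submodule.starProjection_apply] at h; linarith
  rw [hp1, hp2]
  have hcomb : a * ⟪w, v₁⟫ + b * ⟪w, v₂⟫ = ⟪w, a • v₁ + b • v₂⟫ := by
    rw [inner_add_right, real_inner_smul_right, real_inner_smul_right]
  rw [hcomb, hw, had]
  have expand : B (u' + v₁ + v₂) (a • v₁ + b • v₂)
      = (b - a) • (B v₁ v₂ - (↑(𝔪.orthogonalProjection (B v₁ v₂)) : L)) := by
    have hanti21 : B v₂ v₁ = -B v₁ v₂ := hanti v₂ v₁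
    have e : B (u' + v₁ + v₂) (a • v₁ + b • v₂)
        = a • B u' v₁ + b • B u' v₂ + a • B v₁ v₁ + b • B v₁ v₂
          + a • B v₂ v₁ + b • B v₂ v₂ := by
      simp only [map_add, LinearMap.add_apply, map_smul]
      module
    have e2 : B v₂ v₂ = 0 := by
      have h := hanti v₂ v₂
      have h2 : (2:ℝ) • B v₂ v₂ = 0 := by
        rw [two_smul]; nth_rewrite 2 [h]; simp
      simpa using (smul_eq_zero.mp h2).resolve_left two_ne_zero
    rw [e, h11, e2, hanti21]
    linear_combination (norm := module) key
  rw [expand, real_inner_smul_right]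
  have horthZ : ⟪Z, B v₁ v₂ - (↑(𝔪.orthogonalProjection (B v₁ v₂)) : L)⟫ = 0 := by
    rw [real_inner_comm]
    exact Submodule.starProjection_inner_eq_zero (K := 𝔪) (B v₁ v₂) Z hZ
  rw [horthZ]
  ring
end

section
/- Let 𝔤 be a real Lie algebra with ad-invariant inner product, 𝔥 ⊆ 𝔨 ⊆ 𝔤 subalgebras, 𝔪_F = 𝔥^⊥ ∩ 𝔨, 𝔪_B = 𝔨^⊥, 𝔪 = 𝔪_F ⊕ 𝔪_B. Fix nonzero v_F ∈ 𝔪_F, v_B ∈ 𝔪_B, θ ∈ (0,1), and smooth positive φ with φ(θ) − θφ'(θ) > 0 and φ(θ) − (θ−θ⁻¹)φ'(θ) > 0. Suppose u' ∈ 𝔥. Then the geodesic vector equation ⟨[u'+v_F+v_B, Z]_𝔪, (φ(θ)−θφ'(θ))v_F + (φ(θ)−(θ−θ⁻¹)φ'(θ))v_B⟩ = 0 for all Z ∈ 𝔪_F ∪ 𝔪_B holds if and only if [u', v_F] = 0 and θ⁻¹φ'(θ)⟨Z,[v_B,v_F]⟩ + (φ(θ)−(θ−θ⁻¹)φ'(θ))⟨Z,[v_B,u']⟩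 = 0 for all Z ∈ 𝔪_B. -/
open RealInnerProductSpace

/-- for a triple `𝔥 ⊆ 𝔨 ⊆ 𝔤`, the geodesic-vector equation for
`X = u' + v_F + v_B` holds for all `Z ∈ 𝔪_F ∪ 𝔪_B` iff `[u', v_F] = 0` and the
reduced equation (0012) holds on `𝔪_B`. -/
theorem stmt10
    (L : Type*) [NormedAddCommGroup L] [InnerProductSpace ℝ L] [FiniteDimensional ℝ L]
    (B : L →ₗ[ℝ] L →ₗ[ℝ] L)   -- the Lie bracket
    (hanti : ∀ x y : L, B x y = - B y x)
    (hjacobi : ∀ x y z : L, B (B x y) z + B (B y z) x + B (B z x) y = 0)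
    (had : ∀ x y z : L, ⟪B x y, z⟫ = -⟪y, B x z⟫)
    (𝔥 𝔨 : Submodule ℝ L)
    (h𝔥 : ∀ x ∈ 𝔥, ∀ y ∈ 𝔥, B x y ∈ 𝔥)
    (h𝔨 : ∀ x ∈ 𝔨, ∀ y ∈ 𝔨, B x y ∈ 𝔨)
    (h𝔥𝔨 : 𝔥 ≤ 𝔨)
    (𝔪 𝔪F 𝔪B : Submodule ℝ L)
    (h𝔪 : 𝔪 = 𝔥ᗮ) (h𝔪F : 𝔪F = 𝔥ᗮ ⊓ 𝔨) (h𝔪B : 𝔪B = 𝔨ᗮ)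
    (vF : L) (hvF : vF ∈ 𝔪F) (hvF0 : vF ≠ 0)
    (vB : L) (hvB : vB ∈ 𝔪B) (hvB0 : vB ≠ 0)
    (θ : ℝ) (hθ : θ ∈ Set.Ioo (0:ℝ) 1)
    (φ : ℝ → ℝ) (hφ : ContDiff ℝ (⊤ : ℕ∞) φ) (hφpos : ∀ s ∈ Set.Icc (0:ℝ) 1, 0 < φ s)
    (hp1 : 0 < φ θ - θ * deriv φ θ)
    (hp2 : 0 < φ θ - (θ - θ⁻¹) * deriv φ θ)
    (u' : L) (hu' : u' ∈ 𝔥) :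
    (∀ Z ∈ (𝔪F : Set L) ∪ (𝔪B : Set L),
        ⟪(↑(Submodule.orthogonalProjectionOnto 𝔪 (B (u' + vF + vB) Z)) : L),
          (φ θ - θ * deriv φ θ) • vF
            + (φ θ - (θ - θ⁻¹) * deriv φ θ) • vB⟫ = 0)
    ↔ (B u' vF = 0 ∧ ∀ Z ∈ 𝔪B,
        θ⁻¹ * deriv φ θ * ⟪Z, B vB vF⟫
          + (φ θ - (θ - θ⁻¹) * deriv φ θ) * ⟪Z, B vB u'⟫ = 0) := by
  obtain ⟨hθ0, hθ1⟩ := hθ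
  have hθne : θ ≠ 0 := ne_of_gt hθ0
  set a : ℝ := φ θ - θ * deriv φ θ with ha
  set b : ℝ := φ θ - (θ - θ⁻¹) * deriv φ θ with hb
  -- basic membership facts
  have hvFk : vF ∈ 𝔨 := by rw [h𝔪F] at hvF; exact hvF.2
  have hvFh : vF ∈ 𝔥ᗮ := by rw [h𝔪F] at hvF; exact hvF.1
  have hvBk : vB ∈ 𝔨ᗮ := by rwa [h𝔪B] at hvB
  have hu'k : u' ∈ 𝔨 := h𝔥𝔨 hu'
  have hperp : ∀ (K : Submodule ℝ L), ∀ m ∈ Kᗮ, ∀ k ∈ K, ⟪m, k⟫ = 0 := by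
    intro K m hm k hk
    exact (Submodule.mem_orthogonal' K m).mp hm k hk
  have hBxx : ∀ x : L, B x x = 0 := by
    intro x
    have h := hanti x x
    have h2 : (2:ℝ) • B x x = 0 := by
      rw [two_smul]; nth_rewrite 2 [h]; simp
    simpa using (smul_eq_zero.mp h2).resolve_left (by norm_num)
  have hkB : ∀ k ∈ 𝔨, ∀ m ∈ 𝔨ᗮ, B k m ∈ 𝔨ᗮ := by
    intro k hk m hm
    rw [Submodule.mem_orthogonal']
    intro k' hk'
    rw [had]
    rw [hperp 𝔨 m hm _ (h𝔨 k hk k' hk')]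
    simp
  -- [u', vF] ∈ 𝔪F
  have hmemF : B u' vF ∈ 𝔪F := by
    rw [h𝔪F]
    refine Submodule.mem_inf.mpr ⟨?_, h𝔨 u' hu'k vF hvFk⟩
    rw [Submodule.mem_orthogonal']
    intro h hh
    rw [had, hperp 𝔥 vF hvFh _ (h𝔥 u' hu' h hh)]
    simp
  -- the target vector lies in 𝔪
  have hmmem : a • vF + b • vB ∈ 𝔪 := by
    rw [h𝔪]
    exact Submodule.add_mem _ (Submodule.smul_mem _ _ hvFh)
      (Submodule.smul_mem _ _ (Submodule.orthogonal_le h𝔥𝔨 hvBk))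
  -- drop the projection
  have hproj : ∀ w : L,
      ⟪(↑(Submodule.orthogonalProjectionOnto 𝔪 w) : L), a • vF + b • vB⟫ = ⟪w, a • vF + b • vB⟫ := by
    intro w
    have h0 := Submodule.starProjection_inner_eq_zero (K := 𝔪) w (a • vF + b • vB) hmmem
    rw [inner_sub_left, Submodule.starProjection_apply] at h0
    linarith
  -- expansion of the main inner product
  have hexp : ∀ Z : L, ⟪B (u' + vF + vB) Z, a • vF + b • vB⟫
      = a * (-⟪Z, B u' vF⟫ + -⟪Z, B vF vF⟫ + -⟪Z, B vB vF⟫)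
        + b * (-⟪Z, B u' vB⟫ + -⟪Z, B vF vB⟫ + -⟪Z, B vB vB⟫) := by
    intro Z
    simp only [map_add, LinearMap.add_apply, inner_add_left, inner_add_right,
      inner_smul_right, had]
  have keyF : ∀ Z ∈ 𝔪F, ⟪B (u' + vF + vB) Z, a • vF + b • vB⟫ = -(a * ⟪Z, B u' vF⟫) := by
    intro Z hZ
    rw [h𝔪F] at hZ
    have hZk : Z ∈ 𝔨 := hZ.2
    rw [hexp]
    have e1 : ⟪Z, B vF vF⟫ = 0 := by rw [hBxx]; simp
    have e2 : ⟪Z, B vB vF⟫ = 0 := by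
      have : B vB vF ∈ 𝔨ᗮ := by
        rw [hanti]
        exact Submodule.neg_mem _ (hkB vF hvFk vB hvBk)
      rw [real_inner_comm]; exact hperp 𝔨 _ this Z hZk
    have e3 : ⟪Z, B u' vB⟫ = 0 := by
      rw [real_inner_comm]; exact hperp 𝔨 _ (hkB u' hu'k vB hvBk) Z hZk
    have e4 : ⟪Z, B vF vB⟫ = 0 := by
      rw [real_inner_comm]; exact hperp 𝔨 _ (hkB vF hvFk vB hvBk) Z hZk
    have e5 : ⟪Z, B vB vB⟫ = 0 := by rw [hBxx]; simp
    rw [e1, e2, e3, e4, e5]; ring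
  have keyB : ∀ Z ∈ 𝔪B, ⟪B (u' + vF + vB) Z, a • vF + b • vB⟫
      = θ⁻¹ * deriv φ θ * ⟪Z, B vB vF⟫ + b * ⟪Z, B vB u'⟫ := by
    intro Z hZ
    rw [h𝔪B] at hZ
    rw [hexp]
    have e1 : ⟪Z, B u' vF⟫ = 0 := hperp 𝔨 Z hZ _ (h𝔨 u' hu'k vF hvFk)
    have e2 : ⟪Z, B vF vF⟫ = 0 := by rw [hBxx]; simp
    have e3 : ⟪Z, B u' vB⟫ = -⟪Z, B vB u'⟫ := by rw [hanti u' vB]; simp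
    have e4 : ⟪Z, B vF vB⟫ = -⟪Z, B vB vF⟫ := by rw [hanti vF vB]; simp
    have e5 : ⟪Z, B vB vB⟫ = 0 := by rw [hBxx]; simp
    rw [e1, e2, e3, e4, e5]
    have hba : b - a = θ⁻¹ * deriv φ θ := by
      rw [ha, hb]; field_simp; ring
    nlinarith [hba]
  constructor
  · intro H
    have H' : ∀ Z ∈ (𝔪F : Set L) ∪ (𝔪B : Set L),
        ⟪B (u' + vF + vB) Z, a • vF + b • vB⟫ = 0 := by
      intro Z hZ
      rw [← hproj]; exact H Z hZ
    have h1 : B u' vF = 0 := by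
      have h0 := H' (B u' vF) (Or.inl hmemF)
      rw [keyF _ hmemF] at h0
      have : ⟪B u' vF, B u' vF⟫ = 0 := by
        rcases mul_eq_zero.mp (neg_eq_zero.mp h0) with h | h
        · exact absurd h (ne_of_gt hp1)
        · exact h
      exact inner_self_eq_zero.mp this
    refine ⟨h1, fun Z hZ => ?_⟩
    have h0 := H' Z (Or.inr hZ)
    rw [keyB Z hZ] at h0
    exact h0
  · rintro ⟨h1, h2⟩ Z hZ
    rw [hproj]
    rcases hZ with hZ | hZ
    · rw [keyF Z hZ, h1]; simp
    · rw [keyB Z hZ]; exact h2 Z hZ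
end

section
/- Let 𝔤 be a real Lie algebra with ad-invariant inner product, 𝔥 a subalgebra, 𝔪 = 𝔥^⊥ = 𝔪₁ ⊕ 𝔪₂ orthogonal with [𝔥,𝔪ᵢ]⊆𝔪ᵢ. Fix a ≠ b positive reals, and suppose for every nonzero v = v₁+v₂ there exists u ∈ 𝔥 such that ⟨a[u+v, Z]_𝔪, v₁⟩ + ⟨b[u+v, Z]_𝔪, v₂⟩ = 0 for all Z ∈ 𝔪 (the Riemannian g.o. condition for the metric a⟨·,·⟩|_{𝔪₁} ⊕ b⟨·,·⟩|_{𝔪₂}). Then for any nonzero v₁ ∈ 𝔪₁, v₂ ∈ 𝔪₂ and any positive reals c₁, c₂, there exists u ∈ 𝔥 with [u, c₁v₁ + c₂v₂] + [v₁,v₂]_𝔪 = 0. -/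
open RealInnerProductSpace

/-- if the Riemannian metric `a⟨·,·⟩|_{𝔪₁} ⊕ b⟨·,·⟩|_{𝔪₂}` with `a ≠ b`
satisfies the g.o. condition, then the two-parameter algebraic condition of
Theorem 2(3) holds. -/
theorem stmt16
    (L : Type*) [NormedAddCommGroup L] [InnerProductSpace ℝ L] [FiniteDimensional ℝ L]
    (B : L →ₗ[ℝ] L →ₗ[ℝ] L)   -- the Lie bracket
    (hanti : ∀ x y : L, B x y = - B y x)
    (hjacobi : ∀ x y z : L, B (B x y) z + B (B y z) x + B (B z x) y = 0)
    (had : ∀ x y z : L, ⟪B x y, z⟫ = -⟪y, B x z⟫)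
    (𝔥 : Submodule ℝ L) (h𝔥 : ∀ x ∈ 𝔥, ∀ y ∈ 𝔥, B x y ∈ 𝔥)
    (𝔪 𝔪₁ 𝔪₂ : Submodule ℝ L) (h𝔪 : 𝔪 = 𝔥ᗮ)
    (hsum : 𝔪₁ ⊔ 𝔪₂ = 𝔪)
    (horth : ∀ x ∈ 𝔪₁, ∀ y ∈ 𝔪₂, ⟪x, y⟫ = 0)
    (hbr1 : ∀ u ∈ 𝔥, ∀ x ∈ 𝔪₁, B u x ∈ 𝔪₁)
    (hbr2 : ∀ u ∈ 𝔥, ∀ x ∈ 𝔪₂, B u x ∈ 𝔪₂)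
    (a b : ℝ) (ha : 0 < a) (hb : 0 < b) (hab : a ≠ b)
    -- the Riemannian g.o. condition for the metric ⟨·,·⟩_{a,b}
    (hGO : ∀ v₁ ∈ 𝔪₁, ∀ v₂ ∈ 𝔪₂, v₁ + v₂ ≠ 0 →
      ∃ u ∈ 𝔥, ∀ Z ∈ 𝔪,
        a * ⟪(↑(Submodule.orthogonalProjectionOnto 𝔪 (B (u + v₁ + v₂) Z)) : L), v₁⟫
          + b * ⟪(↑(Submodule.orthogonalProjectionOnto 𝔪 (B (u + v₁ + v₂) Z)) : L), v₂⟫ = 0) :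
    ∀ v₁ ∈ 𝔪₁, v₁ ≠ 0 → ∀ v₂ ∈ 𝔪₂, v₂ ≠ 0 → ∀ c₁ c₂ : ℝ, 0 < c₁ → 0 < c₂ →
      ∃ u ∈ 𝔥, B u (c₁ • v₁ + c₂ • v₂)
        + (↑(Submodule.orthogonalProjectionOnto 𝔪 (B v₁ v₂)) : L) = 0 := by
  intro v₁ hv₁ hv₁0 v₂ hv₂ hv₂0 c₁ c₂ hc₁ hc₂
  have h𝔪₁ : 𝔪₁ ≤ 𝔪 := hsum ▸ le_sup_left
  have h𝔪₂ : 𝔪₂ ≤ 𝔪 := hsum ▸ le_sup_right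
  have hba : b - a ≠ 0 := sub_ne_zero.2 (Ne.symm hab)
  set t : ℝ := b / (c₂ * (b - a)) with ht
  set s : ℝ := a / (c₁ * (b - a)) with hs
  have hT : t ≠ 0 := div_ne_zero hb.ne' (mul_ne_zero hc₂.ne' hba)
  have hS : s ≠ 0 := div_ne_zero ha.ne' (mul_ne_zero hc₁.ne' hba)
  have hne : t • v₁ + s • v₂ ≠ 0 := by
    intro h
    have h21 : ⟪v₂, v₁⟫ = (0 : ℝ) := by
      rw [real_inner_comm]; exact horth v₁ hv₁ v₂ hv₂
    have h1 : ⟪t • v₁ + s • v₂, v₁⟫ = t * ⟪v₁, v₁⟫ := by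
      rw [inner_add_left, real_inner_smul_left, real_inner_smul_left, h21]
      ring
    rw [h, inner_zero_left] at h1
    have h2 : ⟪v₁, v₁⟫ ≠ (0 : ℝ) := inner_self_ne_zero.2 hv₁0
    rcases mul_eq_zero.1 h1.symm with h' | h'
    · exact hT h'
    · exact h2 h'
  obtain ⟨u, hu, hEq⟩ := hGO (t • v₁) (𝔪₁.smul_mem t hv₁) (s • v₂) (𝔪₂.smul_mem s hv₂) hne
  refine ⟨u, hu, ?_⟩
  set w : L := u + t • v₁ + s • v₂ with hw
  have hproj : ∀ (X : L), ∀ v ∈ 𝔪, ⟪(↑(Submodule.orthogonalProjectionOnto 𝔪 X) : L), v⟫ = ⟪X, v⟫ := by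
    intro X v hv
    have hX := Submodule.sub_starProjection_mem_orthogonal (K := 𝔪) X
    have h0 : ⟪v, X - ↑(Submodule.orthogonalProjectionOnto 𝔪 X)⟫ = (0 : ℝ) := hX v hv
    rw [inner_sub_right] at h0
    have c1 := real_inner_comm (↑(Submodule.orthogonalProjectionOnto 𝔪 X) : L) v
    have c2 := real_inner_comm X v
    linarith
  have hperp : ((a * t) • B w v₁ + (b * s) • B w v₂) ∈ 𝔪ᗮ := by
    rw [Submodule.mem_orthogonal]
    intro Z hZ
    have h := hEq Z hZ
    rw [hproj _ _ (𝔪.smul_mem t (h𝔪₁ hv₁)), hproj _ _ (𝔪.smul_mem s (h𝔪₂ hv₂))] at h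
    rw [had w Z (t • v₁), had w Z (s • v₂)] at h
    rw [inner_add_right, real_inner_smul_right, real_inner_smul_right]
    have e1 : (B w) (t • v₁) = t • B w v₁ := map_smul (B w) t v₁
    have e2 : (B w) (s • v₂) = s • B w v₂ := map_smul (B w) s v₂
    rw [e1, e2, real_inner_smul_right, real_inner_smul_right] at h
    nlinarith [h]
  have hP0 : (↑(Submodule.orthogonalProjectionOnto 𝔪 ((a * t) • B w v₁ + (b * s) • B w v₂)) : L) = 0 := by
    rw [Submodule.orthogonalProjectionOnto_apply_of_mem_orthogonal hperp]
    rfl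
  have hBvv : ∀ x : L, B x x = 0 := by
    intro x
    have h := hanti x x
    have h2 : B x x + B x x = 0 := by nth_rewrite 1 [h]; abel
    have h3 : (2 : ℝ) • B x x = 0 := by rw [two_smul]; exact h2
    exact (smul_eq_zero.1 h3).resolve_left two_ne_zero
  have hw1 : B w v₁ = B u v₁ - s • B v₁ v₂ := by
    simp only [hw, map_add, map_smul, LinearMap.add_apply, LinearMap.smul_apply,
      hBvv v₁, hanti v₂ v₁]
    module
  have hw2 : B w v₂ = B u v₂ + t • B v₁ v₂ := by
    simp only [hw, map_add, map_smul, LinearMap.add_apply, LinearMap.smul_apply,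
      hBvv v₂]
    module
  have hm1 : B u v₁ ∈ 𝔪 := h𝔪₁ (hbr1 u hu v₁ hv₁)
  have hm2 : B u v₂ ∈ 𝔪 := h𝔪₂ (hbr2 u hu v₂ hv₂)
  set Q : L := (↑(Submodule.orthogonalProjectionOnto 𝔪 (B v₁ v₂)) : L) with hQ
  have key : (a * t) • B u v₁ + (b * s) • B u v₂ + (s * t * (b - a)) • Q = 0 := by
    have hPlin : (↑(Submodule.orthogonalProjectionOnto 𝔪 ((a * t) • B w v₁ + (b * s) • B w v₂)) : L)
        = (a * t) • (↑(Submodule.orthogonalProjectionOnto 𝔪 (B w v₁)) : L)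
          + (b * s) • (↑(Submodule.orthogonalProjectionOnto 𝔪 (B w v₂)) : L) := by
      rw [map_add, map_smul, map_smul]; rfl
    have hP1 : (↑(Submodule.orthogonalProjectionOnto 𝔪 (B w v₁)) : L) = B u v₁ - s • Q := by
      rw [hw1, map_sub, map_smul]
      have h' : (↑(Submodule.orthogonalProjectionOnto 𝔪 (B u v₁)) : L) = B u v₁ :=
        Submodule.starProjection_eq_self_iff.2 hm1
      rw [Submodule.coe_sub, Submodule.coe_smul, h', hQ]
    have hP2 : (↑(Submodule.orthogonalProjectionOnto 𝔪 (B w v₂)) : L) = B u v₂ + t • Q := by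
      rw [hw2, map_add, map_smul]
      have h' : (↑(Submodule.orthogonalProjectionOnto 𝔪 (B u v₂)) : L) = B u v₂ :=
        Submodule.starProjection_eq_self_iff.2 hm2
      rw [Submodule.coe_add, Submodule.coe_smul, h', hQ]
    rw [hPlin, hP1, hP2] at hP0
    rw [← hP0]
    module
  set k : ℝ := a * b / (c₁ * c₂ * (b - a)) with hk
  have hk0 : k ≠ 0 := div_ne_zero (mul_ne_zero ha.ne' hb.ne')
    (mul_ne_zero (mul_ne_zero hc₁.ne' hc₂.ne') hba)
  have e1 : a * t = k * c₁ := by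
    rw [ht, hk]; field_simp
  have e2 : b * s = k * c₂ := by
    rw [hs, hk]; field_simp
  have e3 : s * t * (b - a) = k := by
    rw [hs, ht, hk]; field_simp
  rw [e1, e2, e3] at key
  have hkey2 : k • (c₁ • B u v₁ + c₂ • B u v₂ + Q) = 0 := by
    rw [← key]; module
  have hfinal : c₁ • B u v₁ + c₂ • B u v₂ + Q = 0 :=
    (smul_eq_zero.1 hkey2).resolve_left hk0
  calc B u (c₁ • v₁ + c₂ • v₂) + Q
      = c₁ • B u v₁ + c₂ • B u v₂ + Q := by rw [map_add, map_smul, map_smul]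
    _ = 0 := hfinal
end

section
/- Let 𝔤 be a real Lie algebra with ad-invariant inner product, 𝔥 ⊆ 𝔨 ⊆ 𝔤 subalgebras, 𝔪_F = 𝔥^⊥∩𝔨, 𝔪_B = 𝔨^⊥, and 𝔪 = 𝔪_F ⊕ 𝔪_B. If for every v_F ∈ 𝔪_F and v_B ∈ 𝔪_B there exists u ∈ 𝔥 with [u,v_F] = 0 and [u+v_F,v_B] = 0, then for arbitrary c₁, c₂ > 0 and nonzero v_F ∈ 𝔪_F, v_B ∈ 𝔪_B, there exists u' ∈ 𝔥 with c₁[u',v_F] + c₂[u',v_B] + [v_F,v_B]_𝔪 = 0. -/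
open RealInnerProductSpace

/-- Tamaru's Condition I implies the two-parameter condition of
Theorem 2(3): for all `c₁, c₂ > 0` there is `u' ∈ 𝔥` with
`c₁[u',v_F] + c₂[u',v_B] + [v_F,v_B]_𝔪 = 0`. -/
theorem stmt17
    (L : Type*) [NormedAddCommGroup L] [InnerProductSpace ℝ L] [FiniteDimensional ℝ L]
    (B : L →ₗ[ℝ] L →ₗ[ℝ] L)   -- the Lie bracket
    (hanti : ∀ x y : L, B x y = - B y x)
    (hjacobi : ∀ x y z : L, B (B x y) z + B (B y z) x + B (B z x) y = 0)
    (had : ∀ x y z : L, ⟪B x y, z⟫ = -⟪y, B x z⟫)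
    (𝔥 𝔨 : Submodule ℝ L)
    (h𝔥 : ∀ x ∈ 𝔥, ∀ y ∈ 𝔥, B x y ∈ 𝔥)
    (h𝔨 : ∀ x ∈ 𝔨, ∀ y ∈ 𝔨, B x y ∈ 𝔨)
    (h𝔥𝔨 : 𝔥 ≤ 𝔨)
    (𝔪F 𝔪B : Submodule ℝ L) (h𝔪F : 𝔪F = 𝔥ᗮ ⊓ 𝔨) (h𝔪B : 𝔪B = 𝔨ᗮ)
    -- Condition I
    (hI : ∀ vF ∈ 𝔪F, ∀ vB ∈ 𝔪B, ∃ u ∈ 𝔥, B u vF = 0 ∧ B (u + vF) vB = 0) :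
    ∀ c₁ c₂ : ℝ, 0 < c₁ → 0 < c₂ → ∀ vF ∈ 𝔪F, vF ≠ 0 → ∀ vB ∈ 𝔪B, vB ≠ 0 →
      ∃ u' ∈ 𝔥, c₁ • B u' vF + c₂ • B u' vB
        + (↑(Submodule.orthogonalProjection (𝔥ᗮ) (B vF vB)) : L) = 0 := by
  intro c₁ c₂ hc₁ hc₂ vF hvF hvF0 vB hvB hvB0
  obtain ⟨u, hu, huF, huB⟩ := hI vF hvF vB hvB
  refine ⟨c₂⁻¹ • u, 𝔥.smul_mem _ hu, ?_⟩
  have hvFk : vF ∈ 𝔨 := (h𝔪F ▸ hvF).2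
  have hBperp : B vF vB ∈ 𝔥ᗮ := by
    intro h hh
    have hk : B vF h ∈ 𝔨 := h𝔨 vF hvFk h (h𝔥𝔨 hh)
    have : ⟪B vF vB, h⟫ = -⟪vB, B vF h⟫ := had vF vB h
    have hz : ⟪vB, B vF h⟫ = 0 := by
      have := (h𝔪B ▸ hvB) (B vF h) hk
      rwa [real_inner_comm]
    rw [real_inner_comm]
    simpa [hz] using this
  have hproj : (↑(Submodule.orthogonalProjection (𝔥ᗮ) (B vF vB)) : L) = B vF vB := by
    exact Submodule.starProjection_eq_self_iff.mpr hBperp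
  have hsum : B u vB + B vF vB = 0 := by
    simpa [map_add] using huB
  simp only [map_smul, LinearMap.smul_apply, huF, smul_zero, smul_smul, hproj]
  rw [mul_inv_cancel₀ hc₂.ne', one_smul]
  linear_combination (norm := abel) hsum
end

section
/- Let V = V₁ ⊕ V₂ orthogonal, φ smooth positive on [0,1], and F(v) = |v|φ(|v₂|/|v|) a Minkowski norm. If v is a nonzero vector in V₁ ∪ V₂ and W ∈ V satisfies ⟨v,W⟩ = 0, then (d/dt)F²(v+tW)|_{t=0} = 0. -/
open RealInnerProductSpace

/-- if `v` is a nonzero vector in `V₁ ∪ V₂` and `⟨v,W⟩ = 0`, then the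
first variation of `F²` at `v` in the direction `W` vanishes. -/
theorem stmt19
    (V : Type*) [NormedAddCommGroup V] [InnerProductSpace ℝ V] [FiniteDimensional ℝ V]
    (V₁ : Submodule ℝ V) (hV₁ : V₁ ≠ ⊥) (hV₂ : V₁ᗮ ≠ ⊥)
    (φ : ℝ → ℝ) (hφsmooth : ContDiff ℝ (⊤ : ℕ∞) φ) (hφpos : ∀ s ∈ Set.Icc (0:ℝ) 1, 0 < φ s)
    (F : V → ℝ)
    (hF : ∀ v : V, F v = ‖v‖ * φ (‖(↑(Submodule.orthogonalProjectionOnto V₁ᗮ v) : V)‖ / ‖v‖))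
    -- F is a Minkowski norm:
    (hFcont : Continuous F)
    (hFpos : ∀ v : V, v ≠ 0 → 0 < F v)
    (hFsmooth : ContDiffOn ℝ (⊤ : ℕ∞) F {(0:V)}ᶜ)
    (hFhomog : ∀ (c : ℝ) (v : V), 0 < c → F (c • v) = c * F v)
    (hFconvex : ∀ y : V, y ≠ 0 → ∀ w : V, w ≠ 0 →
      0 < deriv (deriv (fun r : ℝ => F (y + r • w) ^ 2 / 2)) 0)
    (v : V) (hv : v ∈ (V₁ : Set V) ∪ (V₁ᗮ : Set V)) (hv0 : v ≠ 0)
    (W : V) (hvW : ⟪v, W⟫ = 0) :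
    deriv (fun t : ℝ => F (v + t • W) ^ 2) 0 = 0 := by
  -- norms of x + s•y are even in s when ⟪x,y⟫ = 0
  have evnorm : ∀ (x y : V), ⟪x, y⟫ = 0 → ∀ s : ℝ, ‖x + (-s) • y‖ = ‖x + s • y‖ := by
    intro x y h s
    have h1 : ‖x + (-s) • y‖ ^ 2 = ‖x + s • y‖ ^ 2 := by
      rw [norm_add_sq_real, norm_add_sq_real, real_inner_smul_right, real_inner_smul_right, h,
        norm_smul, norm_smul]
      simp [mul_pow]
    nlinarith [norm_nonneg (x + (-s) • y), norm_nonneg (x + s • y)]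
  have hPv : ∀ s : ℝ, (↑(Submodule.orthogonalProjectionOnto V₁ᗮ (v + s • W)) : V)
      = (↑(Submodule.orthogonalProjectionOnto V₁ᗮ v) : V) + s • (↑(Submodule.orthogonalProjectionOnto V₁ᗮ W) : V) := by
    intro s
    simp [map_add, map_smul]
  have hpq : ⟪(↑(Submodule.orthogonalProjectionOnto V₁ᗮ v) : V), (↑(Submodule.orthogonalProjectionOnto V₁ᗮ W) : V)⟫ = 0 := by
    rcases hv with hv | hv
    · have hz : Submodule.orthogonalProjectionOnto V₁ᗮ v = 0 :=
        Submodule.orthogonalProjectionOnto_eq_zero_iff.2 (Submodule.le_orthogonal_orthogonal V₁ hv)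
      rw [hz]
      simp
    · have hs : (↑(Submodule.orthogonalProjectionOnto V₁ᗮ v) : V) = v :=
        by rw [← Submodule.starProjection_apply]; exact Submodule.starProjection_eq_self_iff.2 hv
      rw [hs, ← Submodule.starProjection_apply, ← Submodule.inner_starProjection_left_eq_right,
        Submodule.starProjection_apply, hs, hvW]
  have heven : ∀ t : ℝ, F (v + (-t) • W) = F (v + t • W) := by
    intro t
    rw [hF, hF, hPv, hPv, evnorm v W hvW t,
      evnorm _ _ hpq t]
  have hcomp := deriv_comp_neg (f := fun t : ℝ => F (v + t • W) ^ 2) (x := (0 : ℝ))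
  have hfe : (fun x : ℝ => (fun t : ℝ => F (v + t • W) ^ 2) (-x))
      = fun t : ℝ => F (v + t • W) ^ 2 := by
    funext x
    simp only
    rw [heven x]
  rw [hfe, neg_zero] at hcomp
  linarith
end
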